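/- arXiv:2108.01753 — 2 statements merged into one kernel-verified Lean document; each statement's English description precedes it below -/
import Mathlib

section
/- Assume p(s) > 0 for every s ∈ S. If f is a valid deterministic padding scheme such that H(f) ≤ H(g) for every valid deterministic padding scheme g, then f is nondecreasing in object size: for all s, s' ∈ S, n(s) < n(s') implies f(s) ≤ f(s'). -/
/-!
Suppose `f` is optimal but `f s' < f s` although `n s < n s'`. Then reassigning `s` to
`f s'`, or `s'` to `f s`, keeps `f` valid. Moving one object from a bucket of mass `A` to a
bucket of mass `B` changes the entropy by `η(A - p) + η(B + p) - η(A) - η(B)`, which is negative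
as soon as `A - p < B`, by strict concavity of `η`. Whichever bucket of `f s`, `f s'` is heavier,
one of the two moves satisfies this, contradicting optimality.
-/

/-- `η(t) = -t·log₂ t` (note `Real.logb 2 0 = 0`, so `η 0 = 0`). -/
noncomputable def eta (t : ℝ) : ℝ := -(t * Real.logb 2 t)

/-- A deterministic padding scheme `f` is valid if `n s ≤ f s ≤ c·n s` for all `s`. -/
def ValidDet {S : Type*} (n : S → ℕ) (c : ℝ) (f : S → ℕ) : Prop :=
  ∀ s, n s ≤ f s ∧ (f s : ℝ) ≤ c * (n s : ℝ)

/-- Padded-size entropy `H(f) = Σ_{y ∈ f(S)} η(Σ_{s : f s = y} p s)`. -/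
noncomputable def Hent {S : Type*} [Fintype S] (p : S → ℝ) (f : S → ℕ) : ℝ :=
  ∑ y ∈ Finset.univ.image f, eta (∑ s ∈ Finset.univ.filter (fun s => f s = y), p s)

open Finset Function

theorem StrictConcaveOn.map_add_map_lt {s : Set ℝ} {φ : ℝ → ℝ} (hφ : StrictConcaveOn ℝ s φ)
    {a b q : ℝ} (ha : a ∈ s) (hbq : b + q ∈ s) (hab : a < b) (hq : 0 < q) :
    φ a + φ (b + q) < φ (a + q) + φ b := by
  have hd : 0 < b + q - a := by linarith
  have hμ : 0 < q / (b + q - a) := div_pos hq hd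
  have hν : 0 < (b - a) / (b + q - a) := div_pos (by linarith) hd
  have hμν : q / (b + q - a) + (b - a) / (b + q - a) = 1 := by field_simp; ring
  have hne : a ≠ b + q := by linarith
  -- `a + q` and `b` are the two convex combinations of `a` and `b + q` with swapped weights
  have h₁ := hφ.2 ha hbq hne hν hμ (by linarith)
  have h₂ := hφ.2 ha hbq hne hμ hν hμν
  have e₁ : ((b - a) / (b + q - a)) • a + (q / (b + q - a)) • (b + q) = a + q := by
    simp only [smul_eq_mul]; field_simp; ring
  have e₂ : (q / (b + q - a)) • a + ((b - a) / (b + q - a)) • (b + q) = b := by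
    simp only [smul_eq_mul]; field_simp; ring
  rw [e₁] at h₁
  rw [e₂] at h₂
  simp only [smul_eq_mul] at h₁ h₂
  linear_combination h₁ + h₂ - (φ a + φ (b + q)) * hμν

lemma eta_eq_negMulLog_div (t : ℝ) : eta t = Real.negMulLog t / Real.log 2 := by
  simp only [eta, Real.negMulLog, Real.logb]
  ring

lemma eta_add_eta_lt {a b q : ℝ} (ha : 0 ≤ a) (hab : a < b) (hq : 0 < q) :
    eta a + eta (b + q) < eta (a + q) + eta b := by
  simp only [eta_eq_negMulLog_div, ← add_div]
  exact div_lt_div_of_pos_right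
    (Real.strictConcaveOn_negMulLog.map_add_map_lt ha (by simp only [Set.mem_Ici]; linarith)
      hab hq)
    (Real.log_pos one_lt_two)

section FiberMass

variable {S : Type*} [Fintype S] (p : S → ℝ)

noncomputable def fiberMass (f : S → ℕ) (y : ℕ) : ℝ :=
  ∑ s ∈ univ.filter (fun s => f s = y), p s

lemma Hent_eq_sum_fiberMass (f : S → ℕ) {T : Finset ℕ} (hT : univ.image f ⊆ T) :
    Hent p f = ∑ y ∈ T, eta (fiberMass p f y) := by
  refine sum_subset hT fun y _ hy => ?_
  have hempty : univ.filter (fun s => f s = y) = ∅ :=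
    filter_eq_empty_iff.2 fun s _ hs => hy (hs ▸ mem_image_of_mem f (mem_univ s))
  simp [hempty, eta]

lemma le_fiberMass_apply (hp : ∀ s, 0 ≤ p s) (f : S → ℕ) (s : S) : p s ≤ fiberMass p f (f s) :=
  single_le_sum (fun t _ => hp t) (by simp)

variable [DecidableEq S]

lemma fiberMass_update (f : S → ℕ) (s₀ : S) (y₀ y : ℕ) :
    fiberMass p (update f s₀ y₀) y =
      fiberMass p f y + (if y₀ = y then p s₀ else 0) - (if f s₀ = y then p s₀ else 0) := by
  simp only [fiberMass, sum_filter]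
  rw [← add_sum_erase _ _ (mem_univ s₀), ← add_sum_erase _ (fun t => if f t = y then p t else 0)
    (mem_univ s₀), sum_congr rfl fun t ht => by rw [update_of_ne (ne_of_mem_erase ht)],
    update_self]
  ring

lemma Hent_update_lt (hp : ∀ s, 0 < p s) (f : S → ℕ) (s₀ : S) {y₀ : ℕ} (hy₀ : y₀ ≠ f s₀)
    (hmass : fiberMass p f (f s₀) - p s₀ < fiberMass p f y₀) :
    Hent p (update f s₀ y₀) < Hent p f := by
  set g := update f s₀ y₀
  set T := univ.image f ∪ univ.image g
  rw [Hent_eq_sum_fiberMass p f subset_union_left, Hent_eq_sum_fiberMass p g subset_union_right]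
  have hfT : f s₀ ∈ T := mem_union_left _ (mem_image_of_mem f (mem_univ s₀))
  have hyT : y₀ ∈ T.erase (f s₀) :=
    mem_erase.2 ⟨hy₀, mem_union_right _ (by simpa [g] using mem_image_of_mem g (mem_univ s₀))⟩
  rw [← add_sum_erase _ _ hfT, ← add_sum_erase _ _ hyT, ← add_sum_erase _ _ hfT,
    ← add_sum_erase _ _ hyT]
  have hrest : ∀ y ∈ (T.erase (f s₀)).erase y₀, fiberMass p g y = fiberMass p f y := by
    intro y hy
    obtain ⟨hy₀', hfy⟩ := mem_erase.1 hy
    rw [fiberMass_update, if_neg (Ne.symm hy₀'), if_neg (Ne.symm (ne_of_mem_erase hfy))]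
    ring
  rw [sum_congr rfl fun y hy => congrArg eta (hrest y hy), fiberMass_update, fiberMass_update,
    if_neg hy₀, if_pos rfl, if_pos rfl, if_neg (Ne.symm hy₀), add_zero, sub_zero]
  have hkeep : 0 ≤ fiberMass p f (f s₀) - p s₀ :=
    sub_nonneg.2 (le_fiberMass_apply p (fun s => (hp s).le) f s₀)
  have key := eta_add_eta_lt hkeep hmass (hp s₀)
  rw [sub_add_cancel] at key
  linarith

end FiberMass

lemma ValidDet.update {S : Type*} [DecidableEq S] {n : S → ℕ} {c : ℝ} {f : S → ℕ}
    (hf : ValidDet n c f) (s₀ : S) {y : ℕ} (hlo : n s₀ ≤ y) (hhi : (y : ℝ) ≤ c * n s₀) :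
    ValidDet n c (update f s₀ y) := by
  intro s
  rcases eq_or_ne s s₀ with rfl | hs
  · simpa using ⟨hlo, hhi⟩
  · simpa [update_of_ne hs] using hf s

theorem stmt_3_general {S : Type*} [Fintype S]
    (n : S → ℕ)
    (p : S → ℝ) (hp : ∀ s, 0 < p s)
    (c : ℝ) (hc : 1 ≤ c)
    (f : S → ℕ) (hf : ValidDet n c f)
    (hopt : ∀ g : S → ℕ, ValidDet n c g → Hent p f ≤ Hent p g) :
    ∀ s s' : S, n s < n s' → f s ≤ f s' := by
  classical
  intro s s' hn
  by_contra! hf'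
  rcases lt_or_ge (fiberMass p f (f s) - p s) (fiberMass p f (f s')) with hmass | hmass
  · have hvalid : ValidDet n c (update f s (f s')) :=
      hf.update s (hn.le.trans (hf s').1) ((Nat.cast_le.2 hf'.le).trans (hf s).2)
    exact (hopt _ hvalid).not_gt (Hent_update_lt p hp f s hf'.ne hmass)
  · have hcn : c * n s ≤ c * n s' :=
      mul_le_mul_of_nonneg_left (Nat.cast_le.2 hn.le) (zero_le_one.trans hc)
    have hvalid : ValidDet n c (update f s' (f s)) :=
      hf.update s' ((hf s').1.trans hf'.le) ((hf s).2.trans hcn)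
    exact (hopt _ hvalid).not_gt
      (Hent_update_lt p hp f s' hf'.ne' (by linarith [hp s, hp s']))

/-- a valid deterministic padding scheme minimizing the padded-size entropy
is nondecreasing in object size. -/
theorem stmt_3 {S : Type*} [Fintype S] [DecidableEq S] [Nonempty S]
    (n : S → ℕ) (hn : ∀ s, 1 ≤ n s)
    (p : S → ℝ) (hp : ∀ s, 0 < p s) (hsum : ∑ s, p s = 1)
    (c : ℝ) (hc : 1 ≤ c)
    (f : S → ℕ) (hf : ValidDet n c f)
    (hopt : ∀ g : S → ℕ, ValidDet n c g → Hent p f ≤ Hent p g) :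
    ∀ s s' : S, n s < n s' → f s ≤ f s' :=
  stmt_3_general n p hp c hc f hf hopt
end

section
/- The cardinality |anchors(S)| equals the maximum cardinality of a subset S* ⊆ S such that for all distinct s, s' ∈ S* no natural number y satisfies both n(s) ≤ y ≤ c·n(s) and n(s') ≤ y ≤ c·n(s'). -/
/-!
This is the exactness of greedy interval scheduling, run from the largest sizes down. The anchor
`a = A T` has the largest left endpoint `n a` in `T`, so every `s ∈ reach(T)` has an interval
`[n s, c·n s]` containing `n a`: a family with pairwise disjoint intervals meets `reach(T)` at most
once. Every `s ∉ reach(T)` has `c·n s < n a`, so the anchor's interval misses all intervals left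
for the recursion. Induction on `T` gives both that `anchors T` is such a family and that no such
family inside `T` is larger.
-/

/-- The anchor set `anchors(T)`: for nonempty `T`, take the element `A T` of `T`
maximizing `n` (the choice is provided by the function `A`, with `hA` guaranteeing
`A T ∈ T`), set `reach(T) = {s' ∈ T : n (A T) ≤ c·n s'}`, and recurse on `T \ reach(T)`
(note `A T ∈ reach(T)` since `c ≥ 1`, so `T \ reach(T) = T.filter (¬·)` below). -/
noncomputable def anchors {S : Type*} [DecidableEq S] (n : S → ℕ) (c : ℝ)
    (A : Finset S → S) (hc : 1 ≤ c) (hA : ∀ T : Finset S, T.Nonempty → A T ∈ T)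
    (T : Finset S) : Finset S :=
  if h : T.Nonempty then
    insert (A T)
      (anchors n c A hc hA (T.filter fun s' => ¬((n (A T) : ℝ) ≤ c * (n s' : ℝ))))
  else ∅
termination_by T.card
decreasing_by
  refine Finset.card_lt_card ((Finset.ssubset_iff_of_subset (Finset.filter_subset _ _)).mpr
    ⟨A T, hA T h, ?_⟩)
  intro hmem
  exact (Finset.mem_filter.mp hmem).2 (le_mul_of_one_le_left (by positivity) hc)

/-- The anchor scheme `Z`: `Z s = n (A T)` for the unique step of the above recursion
(started at `T = Finset.univ`) at which `s ∈ reach(T)`. -/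
noncomputable def anchorPad {S : Type*} [DecidableEq S] (n : S → ℕ) (c : ℝ)
    (A : Finset S → S) (hc : 1 ≤ c) (hA : ∀ T : Finset S, T.Nonempty → A T ∈ T)
    (T : Finset S) (s : S) : ℕ :=
  if h : T.Nonempty then
    if s ∈ T ∧ (n (A T) : ℝ) ≤ c * (n s : ℝ) then n (A T)
    else anchorPad n c A hc hA (T.filter fun s' => ¬((n (A T) : ℝ) ≤ c * (n s' : ℝ))) s
  else 0
termination_by T.card
decreasing_by
  refine Finset.card_lt_card ((Finset.ssubset_iff_of_subset (Finset.filter_subset _ _)).mpr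
    ⟨A T, hA T h, ?_⟩)
  intro hmem
  exact (Finset.mem_filter.mp hmem).2 (le_mul_of_one_le_left (by positivity) hc)

def PadDisjoint {S : Type*} (n : S → ℕ) (c : ℝ) (s s' : S) : Prop :=
  ∀ y : ℕ, ¬((n s ≤ y ∧ (y : ℝ) ≤ c * (n s : ℝ)) ∧
    (n s' ≤ y ∧ (y : ℝ) ≤ c * (n s' : ℝ)))

section PadDisjoint

variable {S : Type*} {n : S → ℕ} {c : ℝ}

theorem PadDisjoint.symm {s s' : S} (h : PadDisjoint n c s s') : PadDisjoint n c s' s :=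
  fun y hy => h y hy.symm

theorem padDisjoint_of_mul_lt {s s' : S} (h : c * n s' < n s) : PadDisjoint n c s s' :=
  fun y ⟨⟨hs, _⟩, _, hs'⟩ => by
    have : (n s : ℝ) ≤ y := by exact_mod_cast hs
    linarith

end PadDisjoint

/-- `T \ reach(T)`, the set on which `anchors` recurses. -/
noncomputable def unreached {S : Type*} (n : S → ℕ) (c : ℝ) (A : Finset S → S)
    (T : Finset S) : Finset S :=
  T.filter fun s' => ¬((n (A T) : ℝ) ≤ c * (n s' : ℝ))

section Unreached

variable {S : Type*} {n : S → ℕ} {c : ℝ} {A : Finset S → S}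

theorem mem_unreached {T : Finset S} {s : S} :
    s ∈ unreached n c A T ↔ s ∈ T ∧ c * n s < n (A T) := by
  simp [unreached]

theorem notMem_unreached_self (hc : 1 ≤ c) (T : Finset S) : A T ∉ unreached n c A T := by
  rw [mem_unreached]
  exact fun h => h.2.not_ge (le_mul_of_one_le_left (Nat.cast_nonneg _) hc)

theorem unreached_ssubset (hc : 1 ≤ c) (hA : ∀ T : Finset S, T.Nonempty → A T ∈ T)
    {T : Finset S} (hT : T.Nonempty) : unreached n c A T ⊂ T :=
  Finset.ssubset_iff_of_subset (Finset.filter_subset _ _) |>.mpr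
    ⟨A T, hA T hT, notMem_unreached_self hc T⟩

end Unreached

section Anchors

variable {S : Type*} [DecidableEq S] {n : S → ℕ} {c : ℝ} {A : Finset S → S}

/-- All intervals of `reach(T)` contain `n (A T)`. -/
theorem card_sdiff_unreached_le_one
    (hAmax : ∀ T : Finset S, T.Nonempty → ∀ s ∈ T, n s ≤ n (A T))
    {T Sstar : Finset S} (hT : T.Nonempty) (hsub : Sstar ⊆ T)
    (hdisj : (Sstar : Set S).Pairwise (PadDisjoint n c)) :
    (Sstar \ unreached n c A T).card ≤ 1 := by
  have hreach : ∀ s ∈ Sstar \ unreached n c A T,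
      s ∈ Sstar ∧ n s ≤ n (A T) ∧ (n (A T) : ℝ) ≤ c * n s := by
    intro s hs
    obtain ⟨hsS, hsU⟩ := Finset.mem_sdiff.mp hs
    refine ⟨hsS, hAmax T hT s (hsub hsS), not_lt.mp fun hlt => hsU ?_⟩
    exact mem_unreached.mpr ⟨hsub hsS, hlt⟩
  refine Finset.card_le_one.mpr fun s hs s' hs' => by_contra fun hne => ?_
  obtain ⟨hsS, hs₁, hs₂⟩ := hreach s hs
  obtain ⟨hs'S, hs'₁, hs'₂⟩ := hreach s' hs'
  exact hdisj hsS hs'S hne (n (A T)) ⟨⟨hs₁, hs₂⟩, hs'₁, hs'₂⟩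

variable (hc : 1 ≤ c) (hA : ∀ T : Finset S, T.Nonempty → A T ∈ T)
include hc hA

theorem anchors_empty : anchors n c A hc hA ∅ = ∅ := by
  rw [anchors, dif_neg Finset.not_nonempty_empty]

theorem anchors_of_nonempty {T : Finset S} (hT : T.Nonempty) :
    anchors n c A hc hA T = insert (A T) (anchors n c A hc hA (unreached n c A T)) := by
  rw [anchors, dif_pos hT, unreached]

theorem anchors_subset (T : Finset S) : anchors n c A hc hA T ⊆ T := by
  induction T using Finset.strongInduction with
  | H T ih =>
    rcases T.eq_empty_or_nonempty with rfl | hT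
    · rw [anchors_empty]
    rw [anchors_of_nonempty hc hA hT]
    exact Finset.insert_subset (hA T hT)
      ((ih _ (unreached_ssubset hc hA hT)).trans (Finset.filter_subset _ _))

theorem card_anchors_of_nonempty {T : Finset S} (hT : T.Nonempty) :
    (anchors n c A hc hA T).card = (anchors n c A hc hA (unreached n c A T)).card + 1 := by
  rw [anchors_of_nonempty hc hA hT, Finset.card_insert_of_notMem]
  exact fun h => notMem_unreached_self hc T (anchors_subset hc hA _ h)

theorem pairwise_padDisjoint_anchors (T : Finset S) :
    (anchors n c A hc hA T : Set S).Pairwise (PadDisjoint n c) := by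
  induction T using Finset.strongInduction with
  | H T ih =>
    rcases T.eq_empty_or_nonempty with rfl | hT
    · simp [anchors_empty]
    rw [anchors_of_nonempty hc hA hT, Finset.coe_insert]
    refine (ih _ (unreached_ssubset hc hA hT)).insert fun s hs _ => ?_
    have hdisj := padDisjoint_of_mul_lt (mem_unreached.mp (anchors_subset hc hA _ hs)).2
    exact ⟨hdisj, hdisj.symm⟩

theorem card_le_card_anchors
    (hAmax : ∀ T : Finset S, T.Nonempty → ∀ s ∈ T, n s ≤ n (A T))
    {T Sstar : Finset S} (hsub : Sstar ⊆ T)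
    (hdisj : (Sstar : Set S).Pairwise (PadDisjoint n c)) :
    Sstar.card ≤ (anchors n c A hc hA T).card := by
  induction T using Finset.strongInduction generalizing Sstar with
  | H T ih =>
    rcases T.eq_empty_or_nonempty with rfl | hT
    · simp [Finset.subset_empty.mp hsub]
    have hrest : (Sstar ∩ unreached n c A T).card ≤
        (anchors n c A hc hA (unreached n c A T)).card :=
      ih _ (unreached_ssubset hc hA hT) Finset.inter_subset_right
        (hdisj.mono (by simp))
    have hreach := card_sdiff_unreached_le_one hAmax hT hsub hdisj
    rw [card_anchors_of_nonempty hc hA hT,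
      ← Finset.card_sdiff_add_card_inter Sstar (unreached n c A T)]
    omega

end Anchors

theorem stmt_13_general {S : Type*} [Fintype S] [DecidableEq S]
    (n : S → ℕ)
    (c : ℝ) (hc : 1 ≤ c)
    (A : Finset S → S) (hA : ∀ T : Finset S, T.Nonempty → A T ∈ T)
    (hAmax : ∀ T : Finset S, T.Nonempty → ∀ s ∈ T, n s ≤ n (A T)) :
    IsGreatest
      {k : ℕ | ∃ Sstar : Finset S,
        (∀ s ∈ Sstar, ∀ s' ∈ Sstar, s ≠ s' → ∀ y : ℕ,
          ¬((n s ≤ y ∧ (y : ℝ) ≤ c * (n s : ℝ)) ∧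
            (n s' ≤ y ∧ (y : ℝ) ≤ c * (n s' : ℝ)))) ∧
        Sstar.card = k}
      (anchors n c A hc hA Finset.univ).card :=
  ⟨⟨_, pairwise_padDisjoint_anchors hc hA _, rfl⟩,
    fun _ ⟨_, hdisj, hcard⟩ =>
      hcard ▸ card_le_card_anchors hc hA hAmax (Finset.subset_univ _) hdisj⟩

/-- `|anchors(S)|` is the maximum cardinality of a subset `S* ⊆ S` whose
constraint intervals `[n s, c·n s]` (over ℕ) are pairwise disjoint. -/
theorem stmt_13 {S : Type*} [Fintype S] [DecidableEq S] [Nonempty S]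
    (n : S → ℕ) (hn : ∀ s, 1 ≤ n s)
    (p : S → ℝ) (hp : ∀ s, 0 ≤ p s) (hsum : ∑ s, p s = 1)
    (c : ℝ) (hc : 1 ≤ c)
    (A : Finset S → S) (hA : ∀ T : Finset S, T.Nonempty → A T ∈ T)
    (hAmax : ∀ T : Finset S, T.Nonempty → ∀ s ∈ T, n s ≤ n (A T)) :
    IsGreatest
      {k : ℕ | ∃ Sstar : Finset S,
        (∀ s ∈ Sstar, ∀ s' ∈ Sstar, s ≠ s' → ∀ y : ℕ,
          ¬((n s ≤ y ∧ (y : ℝ) ≤ c * (n s : ℝ)) ∧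
            (n s' ≤ y ∧ (y : ℝ) ≤ c * (n s' : ℝ)))) ∧
        Sstar.card = k}
      (anchors n c A hc hA Finset.univ).card :=
  stmt_13_general n c hc A hA hAmax
end
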